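/- Optimality condition on impulse directions (necessity): under the same setup, each applied nonzero impulse satisfies u_k = α_k û_k with α_k = f(u_k) > 0 and λ*ᵀΓ(t_k)û_k = max_{u ∈ U(1)} λ*ᵀΓ(t_k)u; i.e., every optimal impulse direction maximizes λ*ᵀΓ(t_k)u over the unit cost set. -/

import Mathlib

/-! Normalizing a nonzero impulse by its cost puts `(f u_k)⁻¹ • u_k` in `U(1)`, so homogeneity
gives `λᵀΓ(t_k)u_k ≤ f(u_k) · h` with `h = max_{t ∈ T, u ∈ U(1)} λᵀΓ(t)u`. Summing over `k` gives
`λᵀw ≤ c* · h`, and `c* · h = λᵀw` forces equality in every term, which says exactly that the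
normalized direction attains the maximum of `λᵀΓ(t_k)u` over `U(1)`. -/

open Matrix

theorem pos_of_mem_of_ne_zero {E : Type*} [Zero E] {C : Set E} {f : E → ℝ}
    (hnonneg : ∀ u ∈ C, 0 ≤ f u) (hdefin : ∀ u ∈ C, f u = 0 → u = 0)
    {u : E} (hu : u ∈ C) (hu0 : u ≠ 0) : 0 < f u :=
  (hnonneg u hu).lt_of_ne fun h => hu0 (hdefin u hu h.symm)

section PositivelyHomogeneous

variable {E : Type*} [AddCommGroup E] [Module ℝ E] {C : Set E} {f : E → ℝ}

theorem inv_smul_mem_sublevel (hcone : ∀ u ∈ C, ∀ α : ℝ, 0 ≤ α → α • u ∈ C)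
    (hhom : ∀ u ∈ C, ∀ α : ℝ, 0 ≤ α → f (α • u) = α * f u) {u : E} (hu : u ∈ C)
    (hfu : 0 < f u) : (f u)⁻¹ • u ∈ {v | v ∈ C ∧ f v ≤ 1} := by
  refine ⟨hcone u hu _ (inv_nonneg.2 hfu.le), ?_⟩
  rw [hhom u hu _ (inv_nonneg.2 hfu.le), inv_mul_cancel₀ hfu.ne']

theorem apply_le_mul_of_forall_sublevel_le (φ : E →ₗ[ℝ] ℝ)
    (hcone : ∀ u ∈ C, ∀ α : ℝ, 0 ≤ α → α • u ∈ C)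
    (hhom : ∀ u ∈ C, ∀ α : ℝ, 0 ≤ α → f (α • u) = α * f u)
    (hnonneg : ∀ u ∈ C, 0 ≤ f u) (hdefin : ∀ u ∈ C, f u = 0 → u = 0) {h : ℝ}
    (hφ : ∀ v ∈ {v | v ∈ C ∧ f v ≤ 1}, φ v ≤ h) {u : E} (hu : u ∈ C) : φ u ≤ f u * h := by
  rcases eq_or_ne u 0 with rfl | hu0
  · have hf0 : f 0 = 0 := by simpa using hhom 0 hu 0 le_rfl
    simp [hf0]
  have hfu := pos_of_mem_of_ne_zero hnonneg hdefin hu hu0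
  calc φ u = f u * φ ((f u)⁻¹ • u) := by
        rw [map_smul, smul_eq_mul, mul_inv_cancel_left₀ hfu.ne']
    _ ≤ f u * h := by
        gcongr
        exact hφ _ (inv_smul_mem_sublevel hcone hhom hu hfu)

theorem isGreatest_image_sublevel_inv_smul (φ : E →ₗ[ℝ] ℝ)
    (hcone : ∀ u ∈ C, ∀ α : ℝ, 0 ≤ α → α • u ∈ C)
    (hhom : ∀ u ∈ C, ∀ α : ℝ, 0 ≤ α → f (α • u) = α * f u) {h : ℝ}
    (hφ : ∀ v ∈ {v | v ∈ C ∧ f v ≤ 1}, φ v ≤ h) {u : E} (hu : u ∈ C) (hfu : 0 < f u)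
    (hattained : φ u = f u * h) :
    IsGreatest (φ '' {v | v ∈ C ∧ f v ≤ 1}) (φ ((f u)⁻¹ • u)) := by
  have hval : φ ((f u)⁻¹ • u) = h := by
    rw [map_smul, smul_eq_mul, hattained, inv_mul_cancel_left₀ hfu.ne']
  refine ⟨Set.mem_image_of_mem φ (inv_smul_mem_sublevel hcone hhom hu hfu), ?_⟩
  rintro _ ⟨v, hv, rfl⟩
  exact hval ▸ hφ v hv

end PositivelyHomogeneous

theorem optimal_impulse_directions_general {n m : ℕ} (T : Set ℝ)
    (Γ : ℝ → Matrix (Fin n) (Fin m) ℝ)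
    (C : Set (Fin m → ℝ))
    (hcone : ∀ u ∈ C, ∀ α : ℝ, 0 ≤ α → α • u ∈ C)
    (f : (Fin m → ℝ) → ℝ)
    (hhom : ∀ u ∈ C, ∀ α : ℝ, 0 ≤ α → f (α • u) = α * f u)
    (hnonneg : ∀ u ∈ C, 0 ≤ f u)
    (hdefin : ∀ u ∈ C, f u = 0 → u = 0)
    (U : Set (Fin m → ℝ)) (hU : U = {u | u ∈ C ∧ f u ≤ 1})
    (l w : Fin n → ℝ)
    (hval : ℝ) (hvalpos : 0 < hval)
    (hh : IsGreatest {x : ℝ | ∃ t ∈ T, ∃ u ∈ U, x = l ⬝ᵥ (Γ t).mulVec u} hval)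
    (K : ℕ) (t : Fin K → ℝ) (u : Fin K → (Fin m → ℝ))
    (ht : ∀ k, t k ∈ T) (hu : ∀ k, u k ∈ C)
    (hreach : (∑ k, (Γ (t k)).mulVec (u k)) = w)
    (hcost : (∑ k, f (u k)) = (l ⬝ᵥ w) / hval) :
    ∀ k, u k ≠ 0 → ∃ (α : ℝ) (uhat : Fin m → ℝ),
      0 < α ∧ α = f (u k) ∧ uhat ∈ U ∧ u k = α • uhat ∧
      IsGreatest {x : ℝ | ∃ u' ∈ U, x = l ⬝ᵥ (Γ (t k)).mulVec u'}
        (l ⬝ᵥ (Γ (t k)).mulVec uhat) := by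
  intro k hk
  subst hU
  let φ : Fin K → (Fin m → ℝ) →ₗ[ℝ] ℝ := fun j => dotProductBilin ℝ ℝ l ∘ₗ (Γ (t j)).mulVecLin
  have hφ : ∀ j, ∀ v ∈ {v | v ∈ C ∧ f v ≤ 1}, φ j v ≤ hval :=
    fun j v hv => hh.2 ⟨t j, ht j, v, hv, rfl⟩
  have hle : ∀ j, φ j (u j) ≤ f (u j) * hval := fun j =>
    apply_le_mul_of_forall_sublevel_le (φ j) hcone hhom hnonneg hdefin (hφ j) (hu j)
  have htotal : ∑ j, φ j (u j) = ∑ j, f (u j) * hval := by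
    rw [← Finset.sum_mul, hcost, div_mul_cancel₀ _ hvalpos.ne', ← hreach, dotProduct_sum]
    rfl
  have hattained := (Finset.sum_eq_sum_iff_of_le fun j _ => hle j).1 htotal k (Finset.mem_univ k)
  have hfu := pos_of_mem_of_ne_zero hnonneg hdefin (hu k) hk
  refine ⟨f (u k), (f (u k))⁻¹ • u k, hfu, rfl, inv_smul_mem_sublevel hcone hhom (hu k) hfu,
    (smul_inv_smul₀ hfu.ne' _).symm, ?_⟩
  have hset : {x : ℝ | ∃ u' ∈ {v | v ∈ C ∧ f v ≤ 1}, x = l ⬝ᵥ (Γ (t k)).mulVec u'} =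
      φ k '' {v | v ∈ C ∧ f v ≤ 1} := by
    ext x
    simp [φ, eq_comm]
  rw [hset]
  exact isGreatest_image_sublevel_inv_smul (φ k) hcone hhom (hφ k) (hu k) hfu hattained

/-- Necessary optimality condition on impulse directions: in an optimal impulse
sequence, every nonzero impulse is a positive multiple `α_k·û_k` (with `α_k = f(u_k)`)
of a direction `û_k ∈ U(1)` that maximizes `λ*ᵀΓ(t_k)u` over the unit-cost set. -/
theorem optimal_impulse_directions {n m : ℕ} (T : Set ℝ) (hT : IsCompact T)
    (Γ : ℝ → Matrix (Fin n) (Fin m) ℝ) (hΓ : ContinuousOn Γ T)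
    (C : Set (Fin m → ℝ)) (hC0 : (0 : Fin m → ℝ) ∈ C)
    (hcone : ∀ u ∈ C, ∀ α : ℝ, 0 ≤ α → α • u ∈ C)
    (f : (Fin m → ℝ) → ℝ)
    (hhom : ∀ u ∈ C, ∀ α : ℝ, 0 ≤ α → f (α • u) = α * f u)
    (hnonneg : ∀ u ∈ C, 0 ≤ f u)
    (hdefin : ∀ u ∈ C, f u = 0 → u = 0)
    (U : Set (Fin m → ℝ)) (hU : U = {u | u ∈ C ∧ f u ≤ 1})
    (hUc : IsCompact U) (hUconv : Convex ℝ U)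
    (l w : Fin n → ℝ) (hlw : 0 < l ⬝ᵥ w)
    (hval : ℝ) (hvalpos : 0 < hval)
    (hh : IsGreatest {x : ℝ | ∃ t ∈ T, ∃ u ∈ U, x = l ⬝ᵥ (Γ t).mulVec u} hval)
    (K : ℕ) (t : Fin K → ℝ) (u : Fin K → (Fin m → ℝ))
    (ht : ∀ k, t k ∈ T) (hu : ∀ k, u k ∈ C)
    (hreach : (∑ k, (Γ (t k)).mulVec (u k)) = w)
    (hcost : (∑ k, f (u k)) = (l ⬝ᵥ w) / hval) :
    ∀ k, u k ≠ 0 → ∃ (α : ℝ) (uhat : Fin m → ℝ),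
      0 < α ∧ α = f (u k) ∧ uhat ∈ U ∧ u k = α • uhat ∧
      IsGreatest {x : ℝ | ∃ u' ∈ U, x = l ⬝ᵥ (Γ (t k)).mulVec u'}
        (l ⬝ᵥ (Γ (t k)).mulVec uhat) :=
  optimal_impulse_directions_general T Γ C hcone f hhom hnonneg hdefin U hU l w hval hvalpos hh K t
    u ht hu hreach hcost
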